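/- If I and J are two integrable anticommuting complex structures on a smooth manifold M (so that K = IJ is an almost-complex structure anticommuting with both), then every almost-complex structure aI + bJ + cK with a² + b² + c² = 1 is integrable. -/

import Mathlib

/-!
STATEMENT 5.  If `I` and `J` are two integrable anticommuting complex structures on a
smooth manifold `M` (so that `K = IJ` is an almost complex structure anticommuting with
both), then every almost complex structure `aI + bJ + cK` with `a² + b² + c² = 1` is
integrable.

The smooth manifold is modelled Lie–Rinehart style: a commutative ℝ-algebra `C` of
smooth functions, a `C`-module `V` of vector fields carrying a Lie bracket acting on
`C` by derivations.  An almost complex structure is a `C`-linear endomorphism `L` of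
`V` with `L² = -Id`, and it is integrable iff its Nijenhuis tensor
`N_L(X,Y) = [LX,LY] - L[LX,Y] - L[X,LY] + L²[X,Y]` vanishes.
-/

open Module

/-- Lie–Rinehart style model of the vector fields of a smooth manifold carrying two
anticommuting integrable complex structures `I` and `J`. -/
structure AnticommutingComplexPair where
  /-- the algebra of smooth functions -/
  C : Type
  [instC : CommRing C]
  [instAlg : Algebra ℝ C]
  /-- the module of vector fields -/
  V : Type
  [instV : AddCommGroup V]
  [instModC : Module C V]
  [instModR : Module ℝ V]
  [instTower : IsScalarTower ℝ C V]
  /-- the Lie bracket of vector fields -/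
  bracket : V → V → V
  bracket_add_left : ∀ X Y Z, bracket (X + Y) Z = bracket X Z + bracket Y Z
  bracket_add_right : ∀ X Y Z, bracket X (Y + Z) = bracket X Y + bracket X Z
  bracket_smul_left : ∀ (r : ℝ) (X Y), bracket (r • X) Y = r • bracket X Y
  bracket_antisymm : ∀ X Y, bracket X Y = - bracket Y X
  jacobi : ∀ X Y Z,
    bracket X (bracket Y Z) + bracket Y (bracket Z X) + bracket Z (bracket X Y) = 0
  /-- the action of vector fields on functions by derivations -/
  act : V → C → C
  act_leibniz : ∀ X (f : C) Y, bracket X (f • Y) = f • bracket X Y + (act X f) • Y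
  /-- the two anticommuting almost complex structures -/
  I : V →ₗ[C] V
  J : V →ₗ[C] V
  I_sq : ∀ v, I (I v) = -v
  J_sq : ∀ v, J (J v) = -v
  anticommute : ∀ v, I (J v) + J (I v) = 0

namespace AnticommutingComplexPair

attribute [instance] instC instAlg instV instModC instModR instTower

variable (M : AnticommutingComplexPair)

/-- The Nijenhuis tensor of an endomorphism `L` of the vector fields:
`N_L(X,Y) = [LX,LY] - L[LX,Y] - L[X,LY] + L(L[X,Y])`. -/
def nijenhuis (L : M.V → M.V) (X Y : M.V) : M.V :=
  M.bracket (L X) (L Y) - L (M.bracket (L X) Y) - L (M.bracket X (L Y)) +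
    L (L (M.bracket X Y))

/-- An almost complex structure is integrable iff its Nijenhuis tensor vanishes. -/
def Integrable (L : M.V → M.V) : Prop := ∀ X Y, M.nijenhuis L X Y = 0

end AnticommutingComplexPair

/-!
The Nijenhuis tensor is quadratic in the endomorphism, with polar form `nijenhuisForm`, so
`N_{aI+bJ+cK} = a²N_I + b²N_J + c²N_K + ab N(I,J) + ac N(I,K) + bc N(J,K)`.
For anticommuting complex structures `A`, `B`, both `N(A,B)` and `N_{AB}` are explicit linear
combinations of values of `N_A`, `N_B` and their images under `A`, `B`. Hence `N_K = 0` and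
`N(I,J) = 0`; since `(I,K)` and `(J,K)` are again anticommuting pairs, `N(I,K) = N(J,K) = 0`.
-/

namespace AnticommutingComplexPair

variable (M : AnticommutingComplexPair)

theorem bracket_smul_right (r : ℝ) (X Y : M.V) : M.bracket X (r • Y) = r • M.bracket X Y := by
  rw [M.bracket_antisymm, M.bracket_smul_left, M.bracket_antisymm X Y, smul_neg]

theorem bracket_neg_left (X Y : M.V) : M.bracket (-X) Y = -M.bracket X Y := by
  rw [← neg_one_smul ℝ X, M.bracket_smul_left, neg_one_smul]

theorem bracket_neg_right (X Y : M.V) : M.bracket X (-Y) = -M.bracket X Y := by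
  rw [← neg_one_smul ℝ Y, M.bracket_smul_right, neg_one_smul]

/-- The polarization of `nijenhuis` (see `nijenhuis_add`). -/
def nijenhuisForm (A B : M.V → M.V) (X Y : M.V) : M.V :=
  M.bracket (A X) (B Y) + M.bracket (B X) (A Y) - A (M.bracket (B X) Y) -
    B (M.bracket (A X) Y) - A (M.bracket X (B Y)) - B (M.bracket X (A Y)) +
    A (B (M.bracket X Y)) + B (A (M.bracket X Y))

section

variable {M}

theorem nijenhuis_add (A B : Module.End ℝ M.V) (X Y : M.V) :
    M.nijenhuis ⇑(A + B) X Y =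
      M.nijenhuis A X Y + M.nijenhuis B X Y + M.nijenhuisForm A B X Y := by
  simp only [nijenhuis, nijenhuisForm, LinearMap.add_apply, map_add, M.bracket_add_left,
    M.bracket_add_right]
  abel

theorem nijenhuis_smul (r : ℝ) (A : Module.End ℝ M.V) (X Y : M.V) :
    M.nijenhuis ⇑(r • A) X Y = r ^ 2 • M.nijenhuis A X Y := by
  simp only [nijenhuis, LinearMap.smul_apply, map_smul, M.bracket_smul_left, M.bracket_smul_right]
  module

theorem nijenhuisForm_smul_smul (r s : ℝ) (A B : Module.End ℝ M.V) (X Y : M.V) :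
    M.nijenhuisForm ⇑(r • A) ⇑(s • B) X Y = (r * s) • M.nijenhuisForm A B X Y := by
  simp only [nijenhuisForm, LinearMap.smul_apply, map_smul, M.bracket_smul_left,
    M.bracket_smul_right]
  module

theorem nijenhuisForm_add_left (A A' B : Module.End ℝ M.V) (X Y : M.V) :
    M.nijenhuisForm ⇑(A + A') B X Y = M.nijenhuisForm A B X Y + M.nijenhuisForm A' B X Y := by
  simp only [nijenhuisForm, LinearMap.add_apply, map_add, M.bracket_add_left,
    M.bracket_add_right]
  abel

variable {A B : Module.End ℝ M.V}

theorem nijenhuisForm_eq_of_anticommute (hA : ∀ v, A (A v) = -v) (hB : ∀ v, B (B v) = -v)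
    (hBA : ∀ v, B (A v) = -A (B v)) (X Y : M.V) :
    M.nijenhuisForm A B X Y =
      (1 / 2 : ℝ) • (- M.nijenhuis A X (A (B Y)) - M.nijenhuis A (B X) (A Y)
        + B (M.nijenhuis A X (A Y)) - B (M.nijenhuis A (B X) (A (B Y)))
        + M.nijenhuis B X (A (B Y)) - M.nijenhuis B (A X) (B Y)
        + A (M.nijenhuis B X (B Y)) + A (M.nijenhuis B (A X) (A (B Y)))) := by
  simp only [nijenhuis, nijenhuisForm, map_add, map_sub, map_neg,
    M.bracket_neg_left, M.bracket_neg_right, hA, hB, hBA, neg_neg]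
  module

theorem nijenhuis_mul_eq_of_anticommute (hA : ∀ v, A (A v) = -v) (hB : ∀ v, B (B v) = -v)
    (hBA : ∀ v, B (A v) = -A (B v)) (X Y : M.V) :
    M.nijenhuis ⇑(A * B) X Y =
      (1 / 2 : ℝ) • (M.nijenhuis A X Y + M.nijenhuis A (B X) (B Y)
        - B (M.nijenhuis A X (B Y)) - B (M.nijenhuis A (B X) Y)
        + M.nijenhuis B X Y + M.nijenhuis B (A X) (A Y)
        - A (M.nijenhuis B X (A Y)) - A (M.nijenhuis B (A X) Y)) := by
  simp only [nijenhuis, Module.End.mul_apply, map_add, map_sub, map_neg,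
    M.bracket_neg_left, M.bracket_neg_right, hA, hB, hBA, neg_neg]
  module

theorem nijenhuisForm_eq_zero_of_anticommute (hA : ∀ v, A (A v) = -v) (hB : ∀ v, B (B v) = -v)
    (hBA : ∀ v, B (A v) = -A (B v)) (hIA : M.Integrable A) (hIB : M.Integrable B) (X Y : M.V) :
    M.nijenhuisForm A B X Y = 0 := by
  simp [nijenhuisForm_eq_of_anticommute hA hB hBA, hIA _ _, hIB _ _]

theorem Integrable.mul_of_anticommute (hA : ∀ v, A (A v) = -v) (hB : ∀ v, B (B v) = -v)
    (hBA : ∀ v, B (A v) = -A (B v)) (hIA : M.Integrable A) (hIB : M.Integrable B) :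
    M.Integrable ⇑(A * B) := fun X Y => by
  simp [nijenhuis_mul_eq_of_anticommute hA hB hBA, hIA _ _, hIB _ _]

theorem Integrable.add (hIA : M.Integrable A) (hIB : M.Integrable B)
    (hAB : ∀ X Y, M.nijenhuisForm A B X Y = 0) : M.Integrable ⇑(A + B) := fun X Y => by
  rw [nijenhuis_add, hIA, hIB, hAB, add_zero, add_zero]

theorem Integrable.smul (hIA : M.Integrable A) (r : ℝ) : M.Integrable ⇑(r • A) :=
  fun X Y => by rw [nijenhuis_smul, hIA, smul_zero]

end

end AnticommutingComplexPair

open AnticommutingComplexPair in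
theorem sphere_of_complex_structures_integrable_general
    (M : AnticommutingComplexPair)
    (hI : M.Integrable M.I) (hJ : M.Integrable M.J)
    (a b c : ℝ) :
    M.Integrable (fun v => a • M.I v + b • M.J v + c • M.I (M.J v)) := by
  let I : Module.End ℝ M.V := M.I.restrictScalars ℝ
  let J : Module.End ℝ M.V := M.J.restrictScalars ℝ
  replace hI : M.Integrable I := hI
  replace hJ : M.Integrable J := hJ
  have hI2 : ∀ v, I (I v) = -v := M.I_sq
  have hJ2 : ∀ v, J (J v) = -v := M.J_sq
  have hJI : ∀ v, J (I v) = -I (J v) := fun v => eq_neg_of_add_eq_zero_right (M.anticommute v)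
  have hK2 : ∀ v, (I * J) ((I * J) v) = -v := fun v => by simp [hI2, hJ2, hJI]
  have hKI : ∀ v, (I * J) (I v) = -I ((I * J) v) := fun v => by simp [hI2, hJI]
  have hKJ : ∀ v, (I * J) (J v) = -J ((I * J) v) := fun v => by simp [hJ2, hJI]
  have hK : M.Integrable ⇑(I * J) := Integrable.mul_of_anticommute hI2 hJ2 hJI hI hJ
  have hIJ := nijenhuisForm_eq_zero_of_anticommute hI2 hJ2 hJI hI hJ
  have hIK := nijenhuisForm_eq_zero_of_anticommute hI2 hK2 hKI hI hK
  have hJK := nijenhuisForm_eq_zero_of_anticommute hJ2 hK2 hKJ hJ hK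
  refine ((hI.smul a).add (hJ.smul b) fun X Y => ?_).add (hK.smul c) fun X Y => ?_
  · rw [nijenhuisForm_smul_smul, hIJ, smul_zero]
  · rw [nijenhuisForm_add_left, nijenhuisForm_smul_smul, nijenhuisForm_smul_smul, hIK, hJK,
      smul_zero, smul_zero, add_zero]

/-- if `I` and `J` are integrable anticommuting complex structures,
then for all `(a,b,c)` on the unit sphere the almost complex structure
`aI + bJ + cK`, with `K = IJ`, is integrable. -/
theorem sphere_of_complex_structures_integrable
    (M : AnticommutingComplexPair)
    (hI : M.Integrable M.I) (hJ : M.Integrable M.J)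
    (a b c : ℝ) (h : a ^ 2 + b ^ 2 + c ^ 2 = 1) :
    M.Integrable (fun v => a • M.I v + b • M.J v + c • M.I (M.J v)) :=
  sphere_of_complex_structures_integrable_general M hI hJ a b c
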